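/- arXiv:2209.01505 — 2 statements merged into one kernel-verified Lean document; each statement's English description precedes it below -/
import Mathlib

section
/- For d ≥ 1 natural numbers j_1,...,j_d and any integer N, the product Π_{i=1}^d N^(j_i) of falling factorials equals the iterated sum Σ_{ℓ_2=0}^{j_2} Σ_{ℓ_3=0}^{j_3} ... Σ_{ℓ_d=0}^{j_d} N^(Σ_{i=1}^d j_i − Σ_{i=2}^d ℓ_i) · Π_{i=2}^d [ C(Σ_{ν=1}^{i−1} j_ν − Σ_{ν=2}^{i−1} ℓ_ν, ℓ_i) · C(j_i, ℓ_i) · ℓ_i! ], with the convention that an empty sum equals 0. -/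
/-!
Identify `N^(j)` with the descending Pochhammer polynomial evaluated at `N`. For two factors,
Chu–Vandermonde applied to `N = a + (N - a)` together with `N^(a) (N - a)^(m) = N^(a + m)` gives
`N^(a) N^(b) = ∑ₗ C(a, ℓ) C(b, ℓ) ℓ! N^(a + b - ℓ)`. Multiplying in one factor at a time, with
`a` the current total degree `∑_{ν < i} j_ν - ∑_{ν < i} ℓ_ν`, yields the iterated sum.
-/

/-- Falling factorial on the integers: `fallFacZ x j = x (x-1) ⋯ (x-j+1)`, with
`fallFacZ x 0 = 1`. -/
def fallFacZ (x : ℤ) : ℕ → ℤ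
  | 0 => 1
  | n + 1 => fallFacZ x n * (x - n)

open Polynomial Finset Nat

theorem Fin.sum_piFinset_snoc {M α : Type*} [AddCommMonoid M] {n : ℕ}
    (S : Fin (n + 1) → Finset α) (f : (Fin (n + 1) → α) → M) :
    ∑ ℓ ∈ Fintype.piFinset S, f ℓ =
      ∑ m ∈ S (last n), ∑ ℓ ∈ Fintype.piFinset (init S), f (snoc ℓ m) := by
  rw [← filter_true (Fintype.piFinset S), filter_piFinset_eq_map_snocEquiv S (fun _ => True),
    sum_map, sum_product, filter_true]
  rfl

section descPochhammer

variable {R : Type*} [CommRing R]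

theorem descPochhammer_smeval_eq_eval (n : ℕ) (x : R) :
    (descPochhammer ℤ n).smeval x = (descPochhammer R n).eval x := by
  rw [← descPochhammer_map (Int.castRingHom R), eval_map,
    Subsingleton.elim (Int.castRingHom R) RingHom.smulOneHom, eval₂_smulOneHom_eq_smeval]

theorem descPochhammer_eval_add (k : ℕ) (x y : R) :
    (descPochhammer R k).eval (x + y) = ∑ ij ∈ antidiagonal k,
      k.choose ij.1 * ((descPochhammer R ij.1).eval x * (descPochhammer R ij.2).eval y) := by
  simpa only [descPochhammer_smeval_eq_eval] using
    Ring.descPochhammer_smeval_add k (Commute.all x y)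

theorem descPochhammer_eval_mul_eval_sub (a m : ℕ) (x : R) :
    (descPochhammer R a).eval x * (descPochhammer R m).eval (x - a) =
      (descPochhammer R (a + m)).eval x := by
  rw [← descPochhammer_mul, eval_mul, eval_comp, eval_sub, eval_X, eval_natCast]

theorem descPochhammer_eval_mul_eval (a b : ℕ) (x : R) :
    (descPochhammer R a).eval x * (descPochhammer R b).eval x =
      ∑ k ∈ range (b + 1),
        (a.choose k * b.choose k * k ! : R) * (descPochhammer R (a + b - k)).eval x := by
  calc (descPochhammer R a).eval x * (descPochhammer R b).eval x
      = (descPochhammer R a).eval x * (descPochhammer R b).eval ((a : R) + (x - a)) := by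
        rw [add_sub_cancel]
    _ = ∑ ij ∈ antidiagonal b,
          (b.choose ij.1 * a.descFactorial ij.1 : R) * (descPochhammer R (a + ij.2)).eval x := by
        rw [descPochhammer_eval_add, mul_sum]
        refine sum_congr rfl fun ij _ => ?_
        rw [descPochhammer_eval_eq_descFactorial, ← descPochhammer_eval_mul_eval_sub]
        ring
    _ = _ := by
        rw [Nat.sum_antidiagonal_eq_sum_range_succ
          (fun i k => (b.choose i * a.descFactorial i : R) * (descPochhammer R (a + k)).eval x)]
        refine sum_congr rfl fun k hk => ?_
        rw [descFactorial_eq_factorial_mul_choose, ← Nat.add_sub_assoc (by grind)]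
        push_cast
        ring

def fallFacCoeff {d : ℕ} (j ℓ : Fin d → ℕ) : ℕ :=
  ∏ i, (∑ ν ∈ Iio i, j ν - ∑ ν ∈ Iio i, ℓ ν).choose (ℓ i) * (j i).choose (ℓ i) * (ℓ i)!

theorem fallFacCoeff_snoc {d : ℕ} (j : Fin (d + 1) → ℕ) (ℓ : Fin d → ℕ) (m : ℕ) :
    fallFacCoeff j (Fin.snoc ℓ m) = fallFacCoeff (Fin.init j) ℓ *
      ((∑ i, Fin.init j i - ∑ i, ℓ i).choose m * (j (Fin.last d)).choose m * m !) := by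
  simp only [fallFacCoeff, Fin.prod_univ_castSucc, Fin.Iio_castSucc, Fin.Iio_last_eq_map, sum_map,
    Fin.coe_castSuccEmb, Fin.snoc_castSucc, Fin.snoc_last, Fin.init]

theorem prod_descPochhammer_eval_eq_sum {d : ℕ} (j : Fin d → ℕ) (x : R) :
    ∏ i, (descPochhammer R (j i)).eval x =
      ∑ ℓ ∈ Fintype.piFinset fun i => range (j i + 1),
        (fallFacCoeff j ℓ : R) * (descPochhammer R (∑ i, j i - ∑ i, ℓ i)).eval x := by
  induction d with
  | zero => simp [fallFacCoeff]
  | succ d ih =>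
    rw [Fin.prod_univ_castSucc, Fin.sum_piFinset_snoc, sum_comm]
    refine (congrArg (· * _) (ih (Fin.init j))).trans ?_
    rw [sum_mul]
    refine sum_congr rfl fun ℓ hℓ => ?_
    have hle : ∑ i, ℓ i ≤ ∑ i, Fin.init j i :=
      sum_le_sum fun i _ => Nat.lt_succ_iff.mp (mem_range.mp (Fintype.mem_piFinset.mp hℓ i))
    rw [mul_assoc, descPochhammer_eval_mul_eval, mul_sum]
    refine sum_congr rfl fun m _ => ?_
    rw [fallFacCoeff_snoc, Fin.sum_univ_castSucc j, Fin.sum_univ_castSucc (Fin.snoc ℓ m)]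
    simp only [Fin.snoc_castSucc, Fin.snoc_last]
    rw [show ∑ i, Fin.init j i - ∑ i, ℓ i + j (Fin.last d) - m =
      ∑ i, j (Fin.castSucc i) + j (Fin.last d) - (∑ i, ℓ i + m) by
        simp only [Fin.init] at hle ⊢; omega]
    push_cast
    ring

end descPochhammer

theorem fallFacZ_eq_descPochhammer_eval (N : ℤ) (n : ℕ) :
    fallFacZ N n = (descPochhammer ℤ n).eval N := by
  induction n with
  | zero => simp [fallFacZ]
  | succ n ih => rw [fallFacZ, ih, descPochhammer_succ_eval]

/-- Product of falling factorials `∏_{i=1}^d N^{(j_i)}` expanded as an iterated sum over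
`ℓ_2, …, ℓ_d` (encoded as a sum over tuples `ℓ : Fin d → ℕ` with `ℓ 0 = 0`). -/
theorem prod_fallFac_eq_sum (d : ℕ) (hd : 1 ≤ d) (j : Fin d → ℕ) (N : ℤ) :
    ∏ i, fallFacZ N (j i) =
      ∑ ℓ ∈ (Fintype.piFinset fun i : Fin d => Finset.range (j i + 1)).filter
          (fun ℓ => ℓ ⟨0, hd⟩ = 0),
        fallFacZ N (∑ i, j i - ∑ i, ℓ i) *
          ∏ i ∈ Finset.univ.filter (fun i : Fin d => i ≠ ⟨0, hd⟩),
            ((Nat.choose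
                  (∑ ν ∈ Finset.univ.filter (fun ν : Fin d => ν < i), j ν -
                    ∑ ν ∈ Finset.univ.filter (fun ν : Fin d => ν < i), ℓ ν) (ℓ i) : ℤ) *
              (Nat.choose (j i) (ℓ i) : ℤ) * (Nat.factorial (ℓ i) : ℤ)) := by
  set i₀ : Fin d := ⟨0, hd⟩
  have hIio : Iio i₀ = ∅ := by ext; simp [i₀, Fin.lt_def]
  simp only [fallFacZ_eq_descPochhammer_eval, filter_gt_eq_Iio, prod_descPochhammer_eval_eq_sum]
  -- The factor of `fallFacCoeff` at `i₀` is `C(0, ℓ i₀)`, so the filter only drops zero terms.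
  rw [← sum_filter_of_ne (p := fun ℓ => ℓ i₀ = 0)]
  · refine sum_congr rfl fun ℓ hℓ => ?_
    rw [mul_comm, fallFacCoeff, ← mul_prod_erase _ _ (mem_univ i₀), filter_ne']
    simp [hIio, (mem_filter.mp hℓ).2]
  · intro ℓ _ hne
    contrapose! hne
    rw [fallFacCoeff, prod_eq_zero (mem_univ i₀)]
    · simp
    · simp [hIio, Nat.choose_eq_zero_iff, Nat.pos_of_ne_zero hne]
end

section
/- For every m ∈ ℕ and every p ∈ (0,1), the limit as N → ∞ of N^{−m} · E[(ξ_N − Np)^{2m}] equals (2m−1)!! · (p − p²)^m, where ξ_N ∼ Binomial(N,p) and (2m−1)!! = (2m)!/(2^m m!). -/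
/-! By conditioning on the last trial, the central moments `c_r(N) = E[(ξ_N - N p)^r]`
satisfy `c_r(N + 1) - c_r(N) = ∑_{j ≤ r - 2} C(r, j) μ_{r-j} c_j(N)`, where `μ_t` is the `t`-th
central moment of a Bernoulli(`p`) variable (`μ_0 = 1`, `μ_1 = 0`, `μ_2 = p - p²`). A discrete
Stolz–Cesàro argument turns this into `c_r(N) = o(N^(⌊r/2⌋ + 1))` by strong induction on `r`.
For `r = 2m` only the term `j = 2m - 2` survives at scale `N^(m-1)`, so the limits
`ℓ_m = lim c_{2m}(N) / N^m` satisfy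
`ℓ_m = C(2m, 2) μ_2 ℓ_{m-1} / m = (2m - 1) (p - p²) ℓ_{m-1}`, the recursion of the Gaussian
moments. -/

open Filter

/-- Probability mass function of the `Binomial(N, p)` distribution. -/
def binPMF (N : ℕ) (p : ℝ) (k : ℕ) : ℝ :=
  (N.choose k : ℝ) * p ^ k * (1 - p) ^ (N - k)

/-- Expectation of `f ξ` for `ξ ∼ Binomial(N, p)`. -/
def binExp (N : ℕ) (p : ℝ) (f : ℕ → ℝ) : ℝ :=
  ∑ k ∈ Finset.range (N + 1), binPMF N p k * f k

open Finset Asymptotics Topology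
open scoped fwdDiff

theorem isLittleO_natCast_pow_pow_of_lt {i j : ℕ} (h : i < j) :
    (fun n : ℕ => (n : ℝ) ^ i) =o[atTop] fun n => (n : ℝ) ^ j :=
  (isLittleO_pow_pow_atTop_of_lt h).comp_tendsto tendsto_natCast_atTop_atTop

theorem isBigO_natCast_pow_pow_of_le {i j : ℕ} (h : i ≤ j) :
    (fun n : ℕ => (n : ℝ) ^ i) =O[atTop] fun n => (n : ℝ) ^ j :=
  (isBigO_pow_pow_cobounded_of_le h).comp_tendsto tendsto_natCast_atTop_cobounded

section StolzCesaro

variable {a b : ℕ → ℝ}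

theorem Asymptotics.IsLittleO.of_fwdDiff (hb : Monotone b) (hb_top : Tendsto b atTop atTop)
    (h : Δ_[1] a =o[atTop] Δ_[1] b) : a =o[atTop] b := by
  have hconst (c : ℝ) : (fun _ : ℕ => c) =o[atTop] b :=
    isLittleO_const_left.2 <| .inr <| tendsto_norm_atTop_atTop.comp hb_top
  have htelescope (f : ℕ → ℝ) :
      (fun n => ∑ i ∈ range n, Δ_[1] f i) = fun n => f n - f 0 :=
    funext fun n => sum_range_sub f n
  have hsum : (fun n => a n - a 0) =o[atTop] fun n => b n - b 0 := by
    rw [← htelescope, ← htelescope]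
    refine h.sum_range (fun n => sub_nonneg.2 (hb n.le_succ)) ?_
    simpa only [htelescope, sub_eq_add_neg] using tendsto_atTop_add_const_right _ (-b 0) hb_top
  have hb0 : (fun n => b n - b 0) =O[atTop] b := (isBigO_refl b _).sub (hconst (b 0)).isBigO
  simpa using (hsum.trans_isBigO hb0).add (hconst (a 0))

theorem isEquivalent_fwdDiff_natCast_pow (k : ℕ) :
    Δ_[1] (fun n : ℕ => (n : ℝ) ^ (k + 1)) ~[atTop] fun n => ((k : ℝ) + 1) * (n : ℝ) ^ k := by
  have hexpand (n : ℕ) :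
      Δ_[1] (fun n : ℕ => (n : ℝ) ^ (k + 1)) n - ((k : ℝ) + 1) * (n : ℝ) ^ k
        = ∑ j ∈ range k, (n : ℝ) ^ j * ((k + 1).choose j : ℝ) := by
    rw [fwdDiff, Nat.cast_add_one, add_pow, sum_range_succ, sum_range_succ]
    simp only [one_pow, mul_one, Nat.choose_self, Nat.choose_succ_self_right, Nat.cast_one]
    push_cast
    ring
  have hpow : (fun n : ℕ => (n : ℝ) ^ k) =O[atTop] fun n => ((k : ℝ) + 1) * (n : ℝ) ^ k :=
    isBigO_self_const_mul (by positivity) _ _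
  refine IsLittleO.trans_isBigO ?_ hpow
  rw [show (_ - _ : ℕ → ℝ) = _ from funext hexpand]
  refine IsLittleO.fun_sum fun j hj => ?_
  simpa only [mul_comm] using (isLittleO_natCast_pow_pow_of_lt (mem_range.1 hj)).const_mul_left
    ((k + 1).choose j : ℝ)

theorem isLittleO_natCast_pow_succ_of_fwdDiff {k : ℕ}
    (h : Δ_[1] a =o[atTop] fun n => (n : ℝ) ^ k) : a =o[atTop] fun n => (n : ℝ) ^ (k + 1) := by
  refine .of_fwdDiff (fun m n hmn => by gcongr) ?_ ?_
  · exact (tendsto_pow_atTop k.succ_ne_zero).comp tendsto_natCast_atTop_atTop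
  · exact h.trans_isBigO <| (isBigO_self_const_mul (by positivity) _ _).trans
      (isEquivalent_fwdDiff_natCast_pow k).isBigO_symm

theorem tendsto_div_natCast_pow_succ_of_fwdDiff {k : ℕ} {L : ℝ}
    (h : Tendsto (fun n => Δ_[1] a n / (n : ℝ) ^ k) atTop (𝓝 L)) :
    Tendsto (fun n => a n / (n : ℝ) ^ (k + 1)) atTop (𝓝 (L / (k + 1))) := by
  set c := L / ((k : ℝ) + 1)
  have hL : (fun n => Δ_[1] a n - L * (n : ℝ) ^ k) =o[atTop] fun n => (n : ℝ) ^ k := by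
    rw [isLittleO_iff_tendsto']
    · simpa using (h.sub_const L).congr' <| (eventually_ge_atTop 1).mono fun n hn => by
        field_simp
    · exact (eventually_ge_atTop 1).mono fun n hn h0 => absurd h0 (by positivity)
  have hpow := ((isEquivalent_fwdDiff_natCast_pow k).isLittleO.trans_isBigO
    (isBigO_const_mul_self _ _ _)).const_mul_left c
  have hdiff : Δ_[1] (fun n => a n - c * (n : ℝ) ^ (k + 1)) =o[atTop] fun n => (n : ℝ) ^ k := by
    refine (hL.sub hpow).congr_left fun n => ?_
    simp only [fwdDiff, Pi.sub_apply, c]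
    field_simp
    ring
  have := (isLittleO_natCast_pow_succ_of_fwdDiff hdiff).tendsto_div_nhds_zero.add_const c
  simp only [zero_add] at this
  refine this.congr' <| (eventually_ge_atTop 1).mono fun n hn => ?_
  field_simp
  ring

end StolzCesaro

theorem binPMF_succ_succ (N k : ℕ) (p : ℝ) :
    binPMF (N + 1) p (k + 1) = p * binPMF N p k + (1 - p) * binPMF N p (k + 1) := by
  simp only [binPMF, Nat.choose_succ_succ', Nat.cast_add, Nat.add_sub_add_right]
  rcases lt_or_ge k N with hk | hk
  · rw [show N - k = N - (k + 1) + 1 by omega]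
    ring
  · rw [Nat.choose_eq_zero_of_lt (Nat.lt_succ_of_le hk)]
    ring

theorem binExp_succ (N : ℕ) (p : ℝ) (f : ℕ → ℝ) :
    binExp (N + 1) p f = binExp N p (fun k => (1 - p) * f k + p * f (k + 1)) := by
  have hshift : ∑ k ∈ range (N + 1), binPMF N p (k + 1) * f (k + 1) + binPMF N p 0 * f 0
      = ∑ k ∈ range (N + 1), binPMF N p k * f k := by
    rw [← sum_range_succ' (fun k => binPMF N p k * f k), sum_range_succ]
    simp [binPMF]
  have h0 : binPMF (N + 1) p 0 = (1 - p) * binPMF N p 0 := by simp [binPMF, pow_succ']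
  calc binExp (N + 1) p f
      = p * ∑ k ∈ range (N + 1), binPMF N p k * f (k + 1)
        + (1 - p) * (∑ k ∈ range (N + 1), binPMF N p (k + 1) * f (k + 1)
          + binPMF N p 0 * f 0) := by
        rw [binExp, sum_range_succ', h0]
        simp only [binPMF_succ_succ, add_mul, sum_add_distrib, mul_add, mul_sum, mul_assoc]
        ring
    _ = binExp N p (fun k => (1 - p) * f k + p * f (k + 1)) := by
        rw [hshift, binExp]
        simp only [mul_add, sum_add_distrib, mul_sum]
        ring_nf

theorem binExp_one (N : ℕ) (p : ℝ) : binExp N p (fun _ => 1) = 1 := by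
  induction N with
  | zero => simp [binExp, binPMF]
  | succ N ih => simpa only [binExp_succ, mul_one, sub_add_cancel] using ih

theorem binExp_finset_sum_const_mul {ι : Type*} (N : ℕ) (p : ℝ) (s : Finset ι) (c : ι → ℝ)
    (g : ι → ℕ → ℝ) :
    binExp N p (fun k => ∑ j ∈ s, c j * g j k) = ∑ j ∈ s, c j * binExp N p (g j) := by
  simp only [binExp, mul_sum]
  rw [sum_comm]
  exact sum_congr rfl fun _ _ => sum_congr rfl fun _ _ => by ring

noncomputable def bernoulliCentralMoment (p : ℝ) (t : ℕ) : ℝ :=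
  (1 - p) * (-p) ^ t + p * (1 - p) ^ t

@[simp] theorem bernoulliCentralMoment_zero (p : ℝ) : bernoulliCentralMoment p 0 = 1 := by
  simp [bernoulliCentralMoment]

@[simp] theorem bernoulliCentralMoment_one (p : ℝ) : bernoulliCentralMoment p 1 = 0 := by
  simp only [bernoulliCentralMoment]
  ring

theorem bernoulliCentralMoment_two (p : ℝ) : bernoulliCentralMoment p 2 = p - p ^ 2 := by
  simp only [bernoulliCentralMoment]
  ring

noncomputable def binCentralMoment (p : ℝ) (r N : ℕ) : ℝ :=
  binExp N p fun k => ((k : ℝ) - N * p) ^ r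

theorem binCentralMoment_zero (p : ℝ) (N : ℕ) : binCentralMoment p 0 N = 1 := by
  simp only [binCentralMoment, pow_zero, binExp_one]

theorem binCentralMoment_succ (p : ℝ) (r N : ℕ) :
    binCentralMoment p r (N + 1) = ∑ j ∈ range (r + 1),
      (r.choose j : ℝ) * bernoulliCentralMoment p (r - j) * binCentralMoment p j N := by
  have hexpand (x : ℝ) : (1 - p) * (x - p) ^ r + p * (x + (1 - p)) ^ r
      = ∑ j ∈ range (r + 1), (r.choose j : ℝ) * bernoulliCentralMoment p (r - j) * x ^ j := by
    rw [show x - p = x + -p by ring, add_pow, add_pow, mul_sum, mul_sum, ← sum_add_distrib]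
    refine sum_congr rfl fun j _ => ?_
    rw [bernoulliCentralMoment]
    ring
  simp only [binCentralMoment, binExp_succ, ← binExp_finset_sum_const_mul, ← hexpand]
  push_cast
  ring_nf

theorem fwdDiff_binCentralMoment (p : ℝ) (r N : ℕ) :
    Δ_[1] (binCentralMoment p r) N = ∑ j ∈ range (r - 1),
      (r.choose j : ℝ) * bernoulliCentralMoment p (r - j) * binCentralMoment p j N := by
  rw [fwdDiff, binCentralMoment_succ]
  rcases r with _ | _ | r
  · simp
  · simp [sum_range_succ]
  · rw [sum_range_succ, sum_range_succ]
    simp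

theorem binCentralMoment_isLittleO (p : ℝ) (r : ℕ) :
    binCentralMoment p r =o[atTop] fun N => (N : ℝ) ^ (r / 2 + 1) := by
  induction r using Nat.strong_induction_on with
  | _ r ih =>
  refine isLittleO_natCast_pow_succ_of_fwdDiff ?_
  rw [show Δ_[1] (binCentralMoment p r) = _ from funext (fwdDiff_binCentralMoment p r)]
  refine IsLittleO.fun_sum fun j hj => ?_
  have hj := mem_range.1 hj
  exact ((ih j (by omega)).trans_isBigO
    (isBigO_natCast_pow_pow_of_le (by omega))).const_mul_left _

theorem choose_two_mul_mul_factorial_div (m : ℕ) :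
    ((2 * (m + 1)).choose (2 * m) : ℝ) * ((2 * m).factorial / (2 ^ m * m.factorial)) / (m + 1)
      = (2 * (m + 1)).factorial / (2 ^ (m + 1) * (m + 1).factorial) := by
  rw [show 2 * (m + 1) = 2 * m + 1 + 1 by ring,
    Nat.choose_symm_of_eq_add (show 2 * m + 1 + 1 = 2 * m + 2 by ring), Nat.cast_choose_two,
    Nat.factorial_succ, Nat.factorial_succ, Nat.factorial_succ]
  push_cast
  field_simp
  ring

theorem tendsto_binCentralMoment_two_mul_div (p : ℝ) (m : ℕ) :
    Tendsto (fun N : ℕ => binCentralMoment p (2 * m) N / (N : ℝ) ^ m) atTop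
      (𝓝 ((2 * m).factorial / (2 ^ m * m.factorial) * (p - p ^ 2) ^ m)) := by
  induction m with
  | zero => simp [binCentralMoment_zero]
  | succ m ih =>
  set c : ℝ := ((2 * (m + 1)).choose (2 * m) : ℝ) * bernoulliCentralMoment p 2 with hc
  set lower : ℕ → ℝ := fun N => ∑ j ∈ range (2 * m),
    ((2 * (m + 1)).choose j : ℝ) * bernoulliCentralMoment p (2 * (m + 1) - j)
      * binCentralMoment p j N
  have hdiff (N : ℕ) : Δ_[1] (binCentralMoment p (2 * (m + 1))) N
      = lower N + c * binCentralMoment p (2 * m) N := by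
    rw [fwdDiff_binCentralMoment, show 2 * (m + 1) - 1 = 2 * m + 1 by omega, sum_range_succ,
      show 2 * (m + 1) - 2 * m = 2 by omega, mul_assoc]
  have hlower : lower =o[atTop] fun N => (N : ℝ) ^ m := by
    refine IsLittleO.fun_sum fun j hj => ?_
    have hj := mem_range.1 hj
    exact ((binCentralMoment_isLittleO p j).trans_isBigO
      (isBigO_natCast_pow_pow_of_le (by omega))).const_mul_left _
  have hstep := tendsto_div_natCast_pow_succ_of_fwdDiff <|
    (hlower.tendsto_div_nhds_zero.add (ih.const_mul c)).congr fun N => by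
      rw [hdiff, add_div, mul_div_assoc]
  convert hstep using 2
  rw [zero_add, ← choose_two_mul_mul_factorial_div, hc, bernoulliCentralMoment_two]
  ring

theorem binomial_central_moment_limit_general (m : ℕ) (p : ℝ) :
    Tendsto
      (fun N : ℕ => binExp N p (fun k => ((k : ℝ) - N * p) ^ (2 * m)) / (N : ℝ) ^ m)
      atTop
      (nhds ((Nat.factorial (2 * m) : ℝ) / (2 ^ m * (Nat.factorial m : ℝ)) *
        (p - p ^ 2) ^ m)) :=
  tendsto_binCentralMoment_two_mul_div p m

/-- For `ξ_N ∼ Binomial(N, p)`, `N^{-m} E[(ξ_N - Np)^{2m}] → (2m-1)!! (p - p²)^m`. -/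
theorem binomial_central_moment_limit (m : ℕ) (p : ℝ) (hp0 : 0 < p) (hp1 : p < 1) :
    Tendsto
      (fun N : ℕ => binExp N p (fun k => ((k : ℝ) - N * p) ^ (2 * m)) / (N : ℝ) ^ m)
      atTop
      (nhds ((Nat.factorial (2 * m) : ℝ) / (2 ^ m * (Nat.factorial m : ℝ)) *
        (p - p ^ 2) ^ m)) :=
  binomial_central_moment_limit_general m p
end
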